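/- arXiv:0910.5350 — 6 statements merged into one kernel-verified Lean document; each statement's English description precedes it below -/
import Mathlib

section
/- Let Q ≥ 8 be even, θ₀ = 2π/Q, ω = 2cos θ₀, and let l+1 = φ(Q)/2 where φ is Euler's totient. For every k = k_m in the quasilattice Γ (m ∈ ℕ^Q), there exist integers q₀, q₁, …, q_l (depending on m, with q₀+1 and each q_j integer-valued quadratic forms in m) such that |k_m|² - 1 = q₀ + ω q₁ + … + ω^l q_l. -/
/-!
Writing `ζ = e^{2πi/Q}`, we have `k_m = Σ m_j ζ^j` and `|k_m|² = k_m · conj k_m` with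
`conj ζ = ζ⁻¹`. Expanding the product, every cross term pairs into `ζ^d + ζ^{-d}`, which is a
Dickson polynomial with integer coefficients evaluated at `ω = ζ + ζ⁻¹ = 2cos θ₀`; so
`|k_m|² - 1 = P(ω)` for some `P ∈ ℤ[X]`. Reducing `P` modulo the (monic) minimal polynomial of
the algebraic integer `ω` leaves a polynomial of degree `< [ℚ(ω) : ℚ]`, and
`[ℚ(ω) : ℚ] ≤ φ(Q)/2` because `ℚ(ω) ⊆ ℝ` is a proper subfield of `ℚ(ζ)`, which has
degree `φ(Q)`.
-/

/-- The `j`-th unit wavevector `k_{j+1} = (cos(2πj/Q), sin(2πj/Q))`, identified with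
the complex number `e^{2πij/Q}`. -/
noncomputable def kvec (Q : ℕ) (j : ℕ) : ℂ :=
  Complex.exp (2 * Real.pi * Complex.I * j / Q)

/-- The quasilattice Γ: all combinations `Σ_j m_j k_j` with `m ∈ ℕ^Q`. -/
def Qlattice (Q : ℕ) : Set ℂ :=
  {k | ∃ m : ℕ → ℕ, k = ∑ j ∈ Finset.range Q, (m j : ℂ) * kvec Q j}

/-- The order `N_k`: the minimal total number of generators needed to write `k`. -/
noncomputable def Nord (Q : ℕ) (k : ℂ) : ℕ :=
  sInf {n | ∃ m : ℕ → ℕ, (∑ j ∈ Finset.range Q, m j) = n ∧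
    k = ∑ j ∈ Finset.range Q, (m j : ℂ) * kvec Q j}

open Polynomial Finset IntermediateField ComplexConjugate

section AddInv

variable {A : Type*} [CommRing A] {x y : A}

theorem pow_add_pow_mem_adjoin_add (hxy : x * y = 1) (n : ℕ) :
    x ^ n + y ^ n ∈ Algebra.adjoin ℤ {x + y} := by
  have h := aeval_mem_adjoin_singleton ℤ (x + y) (p := dickson 1 (1 : ℤ) n)
  rwa [aeval_def, eval₂_eq_eval_map, map_dickson, map_one,
    dickson_one_one_eval_add_inv x y hxy] at h

theorem pow_mul_pow_of_mul_eq_one (hxy : x * y = 1) {a b : ℕ} (hba : b ≤ a) :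
    x ^ a * y ^ b = x ^ (a - b) := by
  rw [← Nat.sub_add_cancel hba, pow_add, mul_assoc, ← mul_pow, hxy, one_pow, mul_one,
    Nat.add_sub_cancel]

theorem sum_mul_sum_mem_adjoin_add (hxy : x * y = 1) (a : ℕ → ℤ) (n : ℕ) :
    (∑ i ∈ range n, (a i : A) * x ^ i) * (∑ i ∈ range n, (a i : A) * y ^ i) ∈
      Algebra.adjoin ℤ {x + y} := by
  induction n with
  | zero => simp
  | succ n ih =>
    have hyx : y * x = 1 := by rw [mul_comm, hxy]
    have cross : (∑ i ∈ range n, (a i : A) * x ^ i) * ((a n : A) * y ^ n) +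
        (a n : A) * x ^ n * ∑ i ∈ range n, (a i : A) * y ^ i =
        ∑ i ∈ range n, (a i * a n) • (x ^ (n - i) + y ^ (n - i)) := by
      rw [sum_mul, mul_sum, ← sum_add_distrib]
      refine sum_congr rfl fun i hi => ?_
      have hin : i ≤ n := (mem_range.1 hi).le
      rw [zsmul_eq_mul, ← pow_mul_pow_of_mul_eq_one hxy hin,
        ← pow_mul_pow_of_mul_eq_one hyx hin]
      push_cast
      ring
    have diag : (a n : A) * x ^ n * ((a n : A) * y ^ n) = (a n * a n : ℤ) • 1 := by
      rw [zsmul_eq_mul, mul_one, mul_mul_mul_comm, ← mul_pow, hxy, one_pow, mul_one]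
      push_cast
      ring
    rw [sum_range_succ, sum_range_succ, add_mul, mul_add, mul_add, add_assoc,
      ← add_assoc _ _ (_ * _), cross, diag]
    refine add_mem ih (add_mem (sum_mem fun i _ => ?_) ?_)
    · exact Subalgebra.smul_mem _ (pow_add_pow_mem_adjoin_add hxy _) _
    · exact Subalgebra.smul_mem _ (Subalgebra.one_mem _) _

end AddInv

theorem exists_aeval_two_mul_re_eq_norm_sq_sum {u : ℂ} (hu : ‖u‖ = 1) (a : ℕ → ℤ)
    (n : ℕ) :
    ∃ p : ℤ[X], aeval (2 * u.re) p = ‖∑ i ∈ range n, (a i : ℂ) * u ^ i‖ ^ 2 := by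
  have hu' : u * conj u = 1 := by rw [Complex.mul_conj', hu]; norm_num
  obtain ⟨p, hp⟩ := Algebra.adjoin_singleton_eq_range_aeval ℤ (u + conj u) ▸
    sum_mul_sum_mem_adjoin_add hu' a n
  refine ⟨p, Complex.ofReal_injective <|
    (aeval_algebraMap_apply ℂ (2 * u.re) p).symm.trans ?_⟩
  rw [Complex.coe_algebraMap, ← Complex.add_conj, Complex.ofReal_pow, ← Complex.mul_conj',
    map_sum]
  refine (hp : aeval _ p = _).trans ?_
  simp only [map_mul, map_pow, map_intCast]

theorem exists_natDegree_lt_aeval_eq {R A : Type*} [CommRing R] [Ring A] [Nontrivial A]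
    [Algebra R A] {α : A} (hα : IsIntegral R α) (p : R[X]) :
    ∃ r : R[X], r.natDegree < (minpoly R α).natDegree ∧ aeval α r = aeval α p :=
  ⟨p %ₘ minpoly R α, natDegree_modByMonic_lt p (minpoly.monic hα) (minpoly.ne_one R α),
    aeval_modByMonic_eq_self_of_root (minpoly.aeval R α)⟩

namespace IsPrimitiveRoot

variable {ζ : ℂ} {n : ℕ}

theorem conj_eq_inv (hζ : IsPrimitiveRoot ζ n) (hn : n ≠ 0) : conj ζ = ζ⁻¹ := by
  rw [Complex.inv_def, Complex.normSq_eq_norm_sq, hζ.norm'_eq_one hn]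
  simp

theorem isIntegral_add_conj (hζ : IsPrimitiveRoot ζ n) (hn : n ≠ 0) :
    IsIntegral ℤ (ζ + conj ζ) := by
  rw [hζ.conj_eq_inv hn]
  exact (hζ.isIntegral (Nat.pos_of_ne_zero hn)).add (hζ.inv.isIntegral (Nat.pos_of_ne_zero hn))

theorem isIntegral_two_mul_re (hζ : IsPrimitiveRoot ζ n) (hn : n ≠ 0) :
    IsIntegral ℤ (2 * ζ.re) :=
  (isIntegral_algHom_iff (Complex.ofRealAm.restrictScalars ℤ) Complex.ofReal_injective).1
    (show IsIntegral ℤ ((2 * ζ.re : ℝ) : ℂ) from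
      Complex.add_conj ζ ▸ hζ.isIntegral_add_conj hn)

theorem natDegree_minpoly_two_mul_re_le (hζ : IsPrimitiveRoot ζ n) (hn : n ≠ 0)
    (him : ζ.im ≠ 0) : (minpoly ℤ (2 * ζ.re)).natDegree ≤ n.totient / 2 := by
  have hζint : IsIntegral ℚ ζ := (hζ.isIntegral (Nat.pos_of_ne_zero hn)).tower_top
  have := adjoin.finiteDimensional hζint
  set ω : ℂ := ζ + conj ζ with hω
  have hωζ : ℚ⟮ω⟯ ≤ ℚ⟮ζ⟯ := by
    rw [adjoin_simple_le_iff, hω, hζ.conj_eq_inv hn]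
    exact add_mem (mem_adjoin_simple_self ℚ ζ) (inv_mem (mem_adjoin_simple_self ℚ ζ))
  have hdeg : (minpoly ℤ (2 * ζ.re)).natDegree = Module.finrank ℚ ℚ⟮ω⟯ := by
    have hint := hζ.isIntegral_two_mul_re hn
    rw [adjoin.finrank (hζ.isIntegral_add_conj hn).tower_top, Complex.add_conj,
      show ((2 * ζ.re : ℝ) : ℂ) = Complex.ofRealAm.restrictScalars ℚ (2 * ζ.re) from rfl,
      minpoly.algHom_eq _ Complex.ofReal_injective,
      minpoly.isIntegrallyClosed_eq_field_fractions' ℚ hint, (minpoly.monic hint).natDegree_map]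
  have hφ : Module.finrank ℚ ℚ⟮ζ⟯ = n.totient := by
    rw [adjoin.finrank hζint, ← cyclotomic_eq_minpoly_rat hζ (Nat.pos_of_ne_zero hn),
      natDegree_cyclotomic]
  have hne : Module.finrank ℚ ℚ⟮ω⟯ ≠ n.totient := by
    intro h
    have hreal : ℚ⟮ω⟯ ≤ (Complex.ofRealAm.restrictScalars ℚ).fieldRange :=
      adjoin_simple_le_iff.2 ⟨2 * ζ.re, (Complex.add_conj ζ).symm⟩
    obtain ⟨r, hr⟩ := hreal (eq_of_le_of_finrank_eq hωζ (h.trans hφ.symm) ▸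
      mem_adjoin_simple_self ℚ ζ)
    exact him (hr ▸ Complex.ofReal_im r)
  obtain ⟨c, hc⟩ := hφ ▸ finrank_dvd_of_le_right hωζ
  have hc2 : 2 ≤ c := by
    rcases c with _ | _ | c
    · exact absurd hc (by simpa using (Nat.totient_pos.2 (Nat.pos_of_ne_zero hn)).ne')
    · exact absurd (hc.trans (mul_one _)).symm hne
    · omega
  rw [hdeg, Nat.le_div_iff_mul_le two_pos, hc]
  exact Nat.mul_le_mul_left _ hc2

end IsPrimitiveRoot

theorem kvec_eq_pow (Q j : ℕ) : kvec Q j = Complex.exp (2 * Real.pi * Complex.I / Q) ^ j := by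
  rw [kvec, ← Complex.exp_nat_mul]
  ring_nf

namespace Complex

theorem exp_two_pi_mul_I_div_eq (Q : ℕ) :
    exp (2 * Real.pi * I / Q) = exp ((2 * Real.pi / Q : ℝ) * I) := by
  push_cast
  ring_nf

theorem exp_two_pi_mul_I_div_re (Q : ℕ) :
    (exp (2 * Real.pi * I / Q)).re = Real.cos (2 * Real.pi / Q) := by
  rw [exp_two_pi_mul_I_div_eq, exp_ofReal_mul_I_re]

theorem exp_two_pi_mul_I_div_im_pos {Q : ℕ} (hQ : 3 ≤ Q) :
    0 < (exp (2 * Real.pi * I / Q)).im := by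
  rw [exp_two_pi_mul_I_div_eq, exp_ofReal_mul_I_im]
  refine Real.sin_pos_of_pos_of_lt_pi (by positivity) ?_
  rw [div_lt_iff₀ (by positivity)]
  have hQ' : (3 : ℝ) ≤ Q := by exact_mod_cast hQ
  nlinarith [Real.pi_pos]

end Complex

theorem stmt_7_general (Q : ℕ)
    (l : ℕ) (hl : l + 1 = Nat.totient Q / 2) (m : ℕ → ℕ) :
    ∃ q : Fin (l + 1) → ℤ,
      ‖∑ j ∈ Finset.range Q, (m j : ℂ) * kvec Q j‖ ^ 2 - 1 =
        ∑ j : Fin (l + 1), (q j : ℝ) * (2 * Real.cos (2 * Real.pi / Q)) ^ (j : ℕ) := by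
  have hQ : 3 ≤ Q := by
    by_contra! h
    interval_cases Q <;> simp at hl
  set ζ := Complex.exp (2 * Real.pi * Complex.I / Q)
  have hζ : IsPrimitiveRoot ζ Q := Complex.isPrimitiveRoot_exp Q (by omega)
  obtain ⟨p, hp⟩ := exists_aeval_two_mul_re_eq_norm_sq_sum (hζ.norm'_eq_one (by omega))
    (fun j => m j) Q
  obtain ⟨r, hr, hrp⟩ :=
    exists_natDegree_lt_aeval_eq (hζ.isIntegral_two_mul_re (by omega)) (p - 1)
  have hdeg := hζ.natDegree_minpoly_two_mul_re_le (by omega)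
    (Complex.exp_two_pi_mul_I_div_im_pos hQ).ne'
  refine ⟨fun i => r.coeff i, ?_⟩
  rw [Fin.sum_univ_eq_sum_range
      (fun i => (r.coeff i : ℝ) * (2 * Real.cos (2 * Real.pi / Q)) ^ i),
    ← Complex.exp_two_pi_mul_I_div_re]
  simp_rw [← zsmul_eq_mul]
  rw [← aeval_eq_sum_range' (by omega), hrp, map_sub, hp, map_one]
  simp [kvec_eq_pow, ζ]

/-- with ω = 2cos(2π/Q) and l + 1 = φ(Q)/2, for every m ∈ ℕ^Q there
are integers q₀,…,q_l with |k_m|² - 1 = q₀ + ωq₁ + … + ω^l q_l. -/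
theorem stmt_7 (Q : ℕ) (hQ : 8 ≤ Q) (hQeven : Even Q)
    (l : ℕ) (hl : l + 1 = Nat.totient Q / 2) (m : ℕ → ℕ) :
    ∃ q : Fin (l + 1) → ℤ,
      ‖∑ j ∈ Finset.range Q, (m j : ℂ) * kvec Q j‖ ^ 2 - 1 =
        ∑ j : Fin (l + 1), (q j : ℝ) * (2 * Real.cos (2 * Real.pi / Q)) ^ (j : ℕ) :=
  stmt_7_general Q l hl m
end

section
/- Fix s > Q/4 where Q ≥ 8 is even. The space H_s = {U = Σ_{k∈Γ} U_k e^{ik·x} : ||U||_s² = Σ_{k∈Γ}(1+N_k²)^s |U_k|² < ∞} is a Banach algebra under pointwise multiplication: there exists c_s > 0 such that ||UV||_s ≤ c_s ||U||_s ||V||_s for all U, V ∈ H_s. -/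
/-- The squared H_s norm of a family of Fourier coefficients  supported on Γ:
‖U‖_s² = Σ_{k∈Γ} (1+N_k²)^s |U_k|². -/
noncomputable def HnormSq (Q : ℕ) (s : ℝ) (f : ℂ → ℂ) : ENNReal :=
  ∑' k : Qlattice Q, ENNReal.ofReal
    ((1 + (Nord Q (k : ℂ) : ℝ) ^ 2) ^ s * ‖f (k : ℂ)‖ ^ 2)

/-- Convolution of Fourier coefficients: the coefficients of the pointwise product,
(UV)_K = Σ_{k+k'=K} U_k V_{k'}. -/
noncomputable def conv (f g : ℂ → ℂ) (K : ℂ) : ℂ := ∑' k : ℂ, f k * g (K - k)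

/-!
Write `w_k = (1 + N_k²)^{s/2}`, so that `‖U‖_s² = Σ_{k∈Γ} (w_k |U_k|)²`. Subadditivity of the
order gives `w_K ≤ 2^s (w_k + w_{K-k})`, and Cauchy–Schwarz in `k` gives
`(w_K |(UV)_K|)² ≤ (Σ_k (w_k |U_k| w_{K-k} |V_{K-k}|)²) · Σ_k (w_K / (w_k w_{K-k}))²`,
where the last sum runs over `k, K - k ∈ Γ` and is at most `4 · 4^s · Σ_{k∈Γ} w_k⁻²`.
Summing over `K` gives `‖UV‖_s² ≤ 4 · 4^s (Σ_{k∈Γ} (1 + N_k²)^{-s}) ‖U‖_s² ‖V‖_s²`.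

It remains to see that `Σ_{k∈Γ} (1 + N_k²)^{-s} < ∞`. For `Q = 2d` we have `k_{d+j} = -k_j`, so
an optimal representation `k = Σ_j m_j k_j` yields integer coordinates `n_j = m_j - m_{d+j}`,
`j < d`, which determine `k` and satisfy `|n_j| ≤ N_k`. Hence `(1 + N_k²)^{-s}` is dominated by
`∏_j (1 + n_j²)^{-s/d}`, whose sum over `ℤ^d` is `(Σ_{m∈ℤ} (1 + m²)^{-s/d})^d`, finite for
`s > d/2 = Q/4`.
-/

open Function
open scoped ENNReal NNReal

namespace ENNReal

theorem add_sq_le_two_mul (a b : ℝ≥0∞) : (a + b) ^ 2 ≤ 2 * (a ^ 2 + b ^ 2) := by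
  rcases eq_or_ne a ⊤ with rfl | ha
  · simp
  rcases eq_or_ne b ⊤ with rfl | hb
  · simp
  lift a to ℝ≥0 using ha
  lift b to ℝ≥0 using hb
  exact_mod_cast (add_sq_le : (a + b) ^ 2 ≤ 2 * (a ^ 2 + b ^ 2))

theorem mul_inv_mul_inv_sq_le {x y z C : ℝ≥0∞} (hx0 : x ≠ 0) (hx : x ≠ ⊤) (hy0 : y ≠ 0)
    (hy : y ≠ ⊤) (hz : z ≤ C * (x + y)) :
    (z * x⁻¹ * y⁻¹) ^ 2 ≤ 2 * C ^ 2 * (x⁻¹ ^ 2 + y⁻¹ ^ 2) := by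
  have hinv : (x + y) * x⁻¹ * y⁻¹ = y⁻¹ + x⁻¹ := by
    rw [add_mul, add_mul, ENNReal.mul_inv_cancel hx0 hx, one_mul, mul_right_comm,
      ENNReal.mul_inv_cancel hy0 hy, one_mul]
  calc (z * x⁻¹ * y⁻¹) ^ 2
      ≤ (C * (x + y) * x⁻¹ * y⁻¹) ^ 2 := by gcongr
    _ = C ^ 2 * (y⁻¹ + x⁻¹) ^ 2 := by rw [mul_assoc C, mul_assoc C, hinv, mul_pow]
    _ ≤ C ^ 2 * (2 * (y⁻¹ ^ 2 + x⁻¹ ^ 2)) := by gcongr; exact add_sq_le_two_mul _ _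
    _ = 2 * C ^ 2 * (x⁻¹ ^ 2 + y⁻¹ ^ 2) := by ring

theorem rpow_half_sq (x : ℝ≥0∞) : (x ^ (1 / 2 : ℝ)) ^ 2 = x := by
  simpa using rpow_inv_natCast_pow two_ne_zero x

theorem tsum_mul_sq_le {α : Type*} (f g : α → ℝ≥0∞) :
    (∑' i, f i * g i) ^ 2 ≤ (∑' i, f i ^ 2) * ∑' i, g i ^ 2 := by
  have h : ∑' i, f i * g i ≤ (∑' i, f i ^ 2) ^ (1 / 2 : ℝ) * (∑' i, g i ^ 2) ^ (1 / 2 : ℝ) := by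
    refine ENNReal.summable.tsum_le_of_sum_le fun s => ?_
    have hs := inner_le_Lp_mul_Lq s f g Real.HolderConjugate.two_two
    simp only [rpow_two] at hs
    refine hs.trans ?_
    gcongr <;> exact ENNReal.sum_le_tsum s
  calc (∑' i, f i * g i) ^ 2
      ≤ ((∑' i, f i ^ 2) ^ (1 / 2 : ℝ) * (∑' i, g i ^ 2) ^ (1 / 2 : ℝ)) ^ 2 := by gcongr
    _ = (∑' i, f i ^ 2) * ∑' i, g i ^ 2 := by rw [mul_pow, rpow_half_sq, rpow_half_sq]

theorem tsum_tsum_mul_sub {G : Type*} [AddGroup G] (x y : G → ℝ≥0∞) :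
    ∑' K, ∑' k, x k * y (K - k) = (∑' k, x k) * ∑' k, y k := by
  rw [ENNReal.tsum_comm, ← ENNReal.tsum_mul_right]
  refine tsum_congr fun k => ?_
  rw [ENNReal.tsum_mul_left, ← (Equiv.subRight k).tsum_eq y]
  rfl

theorem tsum_pi_prod {α : Type*} (a : α → ℝ≥0∞) (d : ℕ) :
    ∑' n : Fin d → α, ∏ j, a (n j) = (∑' x, a x) ^ d := by
  induction d with
  | zero => simp
  | succ d ih =>
    rw [← (Fin.consEquiv fun _ => α).tsum_eq, ENNReal.tsum_prod', pow_succ', ← ih,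
      ← ENNReal.tsum_mul_right]
    refine tsum_congr fun x => ?_
    rw [← ENNReal.tsum_mul_left]
    refine tsum_congr fun n => ?_
    simp [Fin.consEquiv, Fin.prod_univ_succ]

theorem rpow_half_le_of_le_sq_mul {x y z c : ℝ≥0∞} (h : x ≤ c ^ 2 * (y * z)) :
    x ^ (1 / 2 : ℝ) ≤ c * y ^ (1 / 2 : ℝ) * z ^ (1 / 2 : ℝ) := by
  calc x ^ (1 / 2 : ℝ) ≤ (c ^ 2 * (y * z)) ^ (1 / 2 : ℝ) := by gcongr
    _ = c * y ^ (1 / 2 : ℝ) * z ^ (1 / 2 : ℝ) := by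
      rw [ENNReal.mul_rpow_of_nonneg _ _ (by norm_num),
        ENNReal.mul_rpow_of_nonneg _ _ (by norm_num),
        ← mul_assoc]
      congr
      simpa using ENNReal.pow_rpow_inv_natCast two_ne_zero c

theorem exists_pos_le_ofReal_sq {M : ℝ≥0∞} (hM : M ≠ ⊤) :
    ∃ c > (0 : ℝ), M ≤ ENNReal.ofReal c ^ 2 := by
  refine ⟨Real.sqrt (M.toReal + 1), by positivity, ?_⟩
  rw [← ENNReal.ofReal_pow (by positivity), Real.sq_sqrt (by positivity)]
  exact (ENNReal.ofReal_toReal hM).symm.le.trans (ENNReal.ofReal_le_ofReal (by linarith))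

end ENNReal

section WeightedConvolution

variable {G : Type*} [AddCommGroup G] (Γ : Set G) (w : G → ℝ≥0∞)

noncomputable def pairRatio (K : G) : G → ℝ≥0∞ :=
  (Γ ∩ {k | K - k ∈ Γ}).indicator fun k => w K * (w k)⁻¹ * (w (K - k))⁻¹

variable {Γ w}

theorem tsum_pairRatio_sq_le {C : ℝ≥0∞} (hw_add : ∀ k ∈ Γ, ∀ k' ∈ Γ, w (k + k') ≤ C * (w k + w k'))
    (hw0 : ∀ k, w k ≠ 0) (hw_top : ∀ k, w k ≠ ⊤) (K : G) :
    ∑' k, pairRatio Γ w K k ^ 2 ≤ 4 * C ^ 2 * ∑' k, Γ.indicator (fun k => (w k)⁻¹ ^ 2) k := by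
  set S := ∑' k, Γ.indicator (fun k => (w k)⁻¹ ^ 2) k
  have hsq : ∀ k, pairRatio Γ w K k ^ 2 ≤
      2 * C ^ 2 * (Γ.indicator (fun k => (w k)⁻¹ ^ 2) k +
        Γ.indicator (fun k => (w k)⁻¹ ^ 2) (K - k)) := by
    intro k
    by_cases hk : k ∈ Γ ∩ {k | K - k ∈ Γ}
    · have hk2 : K - k ∈ Γ := hk.2
      rw [pairRatio, Set.indicator_of_mem hk, Set.indicator_of_mem hk.1, Set.indicator_of_mem hk2]
      have hK := hw_add k hk.1 (K - k) hk2
      rw [add_sub_cancel] at hK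
      exact ENNReal.mul_inv_mul_inv_sq_le (hw0 _) (hw_top _) (hw0 _) (hw_top _) hK
    · simp [pairRatio, Set.indicator_of_notMem hk]
  have hshift : ∑' k, Γ.indicator (fun k => (w k)⁻¹ ^ 2) (K - k) = S :=
    (Equiv.subLeft K).tsum_eq (Γ.indicator fun k => (w k)⁻¹ ^ 2)
  calc ∑' k, pairRatio Γ w K k ^ 2
      ≤ ∑' k, 2 * C ^ 2 * (Γ.indicator (fun k => (w k)⁻¹ ^ 2) k +
          Γ.indicator (fun k => (w k)⁻¹ ^ 2) (K - k)) := ENNReal.tsum_le_tsum hsq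
    _ = 2 * C ^ 2 * (S + S) := by rw [ENNReal.tsum_mul_left, ENNReal.tsum_add, hshift]
    _ = 4 * C ^ 2 * S := by ring

theorem weight_mul_eq_mul_pairRatio {a b : G → ℝ≥0∞} (hw0 : ∀ k, w k ≠ 0)
    (hw_top : ∀ k, w k ≠ ⊤) (ha : ∀ k ∉ Γ, a k = 0) (hb : ∀ k ∉ Γ, b k = 0) (K k : G) :
    w K * (a k * b (K - k)) = (w k * a k) * (w (K - k) * b (K - k)) * pairRatio Γ w K k := by
  by_cases hk : k ∈ Γ ∩ {k | K - k ∈ Γ}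
  · rw [pairRatio, Set.indicator_of_mem hk]
    calc w K * (a k * b (K - k))
        = w K * (a k * b (K - k)) * (w k * (w k)⁻¹) * (w (K - k) * (w (K - k))⁻¹) := by
          rw [ENNReal.mul_inv_cancel (hw0 _) (hw_top _),
            ENNReal.mul_inv_cancel (hw0 _) (hw_top _), mul_one, mul_one]
      _ = _ := by ring
  · rw [pairRatio, Set.indicator_of_notMem hk, mul_zero]
    rcases not_and_or.mp hk with hk | hk
    · rw [ha k hk, zero_mul, mul_zero]
    · rw [hb _ hk, mul_zero, mul_zero]

theorem tsum_weight_mul_conv_sq_le {a b : G → ℝ≥0∞} {C : ℝ≥0∞}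
    (hw_add : ∀ k ∈ Γ, ∀ k' ∈ Γ, w (k + k') ≤ C * (w k + w k'))
    (hw0 : ∀ k, w k ≠ 0) (hw_top : ∀ k, w k ≠ ⊤)
    (ha : ∀ k ∉ Γ, a k = 0) (hb : ∀ k ∉ Γ, b k = 0) :
    ∑' K, (w K * ∑' k, a k * b (K - k)) ^ 2 ≤
      4 * C ^ 2 * (∑' k, Γ.indicator (fun k => (w k)⁻¹ ^ 2) k) *
        ((∑' k, (w k * a k) ^ 2) * ∑' k, (w k * b k) ^ 2) := by
  set S := ∑' k, Γ.indicator (fun k => (w k)⁻¹ ^ 2) k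
  calc ∑' K, (w K * ∑' k, a k * b (K - k)) ^ 2
      = ∑' K, (∑' k, (w k * a k) * (w (K - k) * b (K - k)) * pairRatio Γ w K k) ^ 2 := by
        simp_rw [← ENNReal.tsum_mul_left, weight_mul_eq_mul_pairRatio hw0 hw_top ha hb]
    _ ≤ ∑' K, (∑' k, (w k * a k) ^ 2 * (w (K - k) * b (K - k)) ^ 2) * (4 * C ^ 2 * S) :=
        ENNReal.tsum_le_tsum fun K => (ENNReal.tsum_mul_sq_le _ _).trans <|
          mul_le_mul' (tsum_congr fun k => mul_pow _ _ 2).le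
            (tsum_pairRatio_sq_le hw_add hw0 hw_top K)
    _ = 4 * C ^ 2 * S * ((∑' k, (w k * a k) ^ 2) * ∑' k, (w k * b k) ^ 2) := by
        rw [ENNReal.tsum_mul_right,
          ENNReal.tsum_tsum_mul_sub (fun k => (w k * a k) ^ 2) (fun k => (w k * b k) ^ 2),
          mul_comm]

end WeightedConvolution

section Quasilattice

open Finset

theorem kvec_add_half {d : ℕ} (hd : d ≠ 0) (j : ℕ) : kvec (d + d) (d + j) = -kvec (d + d) j := by
  have hd' : (d : ℂ) ≠ 0 := Nat.cast_ne_zero.mpr hd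
  have harg : 2 * (Real.pi : ℂ) * Complex.I * ((d + j : ℕ) : ℂ) / ((d + d : ℕ) : ℂ) =
      2 * Real.pi * Complex.I * j / ((d + d : ℕ) : ℂ) + Real.pi * Complex.I := by
    push_cast
    field_simp
    ring
  rw [kvec, kvec, harg, Complex.exp_add, Complex.exp_pi_mul_I, mul_neg_one]

theorem exists_Nord_repr {Q : ℕ} {k : ℂ} (hk : k ∈ Qlattice Q) :
    ∃ m : ℕ → ℕ, ∑ j ∈ range Q, m j = Nord Q k ∧ k = ∑ j ∈ range Q, (m j : ℂ) * kvec Q j := by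
  obtain ⟨m, hm⟩ := hk
  have hne : {n | ∃ m : ℕ → ℕ, ∑ j ∈ range Q, m j = n ∧
      k = ∑ j ∈ range Q, (m j : ℂ) * kvec Q j}.Nonempty := ⟨_, m, rfl, hm⟩
  exact Nat.sInf_mem hne

theorem Nord_add_le {Q : ℕ} {k k' : ℂ} (hk : k ∈ Qlattice Q) (hk' : k' ∈ Qlattice Q) :
    Nord Q (k + k') ≤ Nord Q k + Nord Q k' := by
  obtain ⟨m, hm_sum, hm⟩ := exists_Nord_repr hk
  obtain ⟨m', hm'_sum, hm'⟩ := exists_Nord_repr hk'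
  refine Nat.sInf_le ⟨m + m', by simp [sum_add_distrib, hm_sum, hm'_sum], ?_⟩
  simp [hm, hm', add_mul, sum_add_distrib]

theorem exists_injective_int_coords (d : ℕ) :
    ∃ ι : Qlattice (d + d) → (Fin d → ℤ), Injective ι ∧
      ∀ k j, |ι k j| ≤ Nord (d + d) (k : ℂ) := by
  choose m hm_sum hm using fun k : Qlattice (d + d) => exists_Nord_repr k.2
  refine ⟨fun k j => m k j - m k (d + j), fun k k' hkk' => Subtype.ext ?_, fun k j => ?_⟩
  · have hcoords : ∀ k : Qlattice (d + d),
        (k : ℂ) = ∑ j : Fin d, ((m k j - m k (d + j) : ℤ) : ℂ) * kvec (d + d) j := by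
      intro k
      rw [hm k, sum_range_add, Fin.sum_univ_eq_sum_range
        (fun j => ((m k j - m k (d + j) : ℤ) : ℂ) * kvec (d + d) j), ← sum_add_distrib]
      refine sum_congr rfl fun j hj => ?_
      rw [kvec_add_half (by rintro rfl; simp at hj)]
      push_cast
      ring
    rw [hcoords k, hcoords k']
    refine sum_congr rfl fun j _ => ?_
    rw [show (m k j - m k (d + j) : ℤ) = m k' j - m k' (d + j) from congrFun hkk' j]
  · have hpair : m k j + m k (d + j) ≤ Nord (d + d) k := by
      rw [← hm_sum k, sum_range_add]
      have hj : (j : ℕ) ∈ range d := mem_range.mpr j.2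
      exact add_le_add (single_le_sum (f := m k) (fun _ _ => Nat.zero_le _) hj)
        (single_le_sum (f := fun i => m k (d + i)) (fun _ _ => Nat.zero_le _) hj)
    calc |(m k j : ℤ) - m k (d + j)| ≤ m k j + m k (d + j) := by
          rw [abs_le]; constructor <;> linarith [(m k j).cast_nonneg (α := ℤ),
            (m k (d + j)).cast_nonneg (α := ℤ)]
      _ ≤ Nord (d + d) k := by exact_mod_cast hpair

end Quasilattice

section LatticeSums

theorem summable_one_add_sq_rpow_neg {p : ℝ} (hp : 1 / 2 < p) :
    Summable fun m : ℤ => (1 + (m : ℝ) ^ 2) ^ (-p) := by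
  refine Summable.of_norm_bounded_eventually
    (Real.summable_abs_int_rpow (b := 2 * p) (by linarith)) ?_
  refine (Filter.eventually_cofinite_ne 0).mono fun m hm0 => ?_
  have hm' : (0 : ℝ) < |(m : ℝ)| := by simpa using hm0
  rw [Real.norm_of_nonneg (by positivity), ← mul_neg, Real.rpow_mul hm'.le, Real.rpow_two,
    sq_abs]
  exact Real.rpow_le_rpow_of_nonpos (by positivity) (by linarith) (by linarith)

theorem tsum_one_add_sq_rpow_neg_ne_top {X : Type*} {d : ℕ} (hd : 0 < d) (N : X → ℕ)
    (ι : X → Fin d → ℤ) (hι : Injective ι) (hN : ∀ x j, |ι x j| ≤ N x) {s : ℝ}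
    (hs : (d : ℝ) < 2 * s) :
    ∑' x, ENNReal.ofReal ((1 + (N x : ℝ) ^ 2) ^ (-s)) ≠ ⊤ := by
  have hd' : (0 : ℝ) < d := by exact_mod_cast hd
  set p := s / d
  have hp : 1 / 2 < p := by rw [lt_div_iff₀ hd']; linarith
  set a : ℤ → ℝ≥0∞ := fun m => ENNReal.ofReal ((1 + (m : ℝ) ^ 2) ^ (-p))
  have hpoint : ∀ x, ENNReal.ofReal ((1 + (N x : ℝ) ^ 2) ^ (-s)) ≤ ∏ j, a (ι x j) := by
    intro x
    have hprod : ∏ j, (1 + (ι x j : ℝ) ^ 2) ≤ (1 + (N x : ℝ) ^ 2) ^ d := by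
      calc ∏ j, (1 + (ι x j : ℝ) ^ 2) ≤ ∏ _j : Fin d, (1 + (N x : ℝ) ^ 2) := by
            refine Finset.prod_le_prod (fun j _ => by positivity) fun j _ => ?_
            rw [add_le_add_iff_left, sq_le_sq, abs_of_nonneg (Nat.cast_nonneg (α := ℝ) (N x))]
            exact_mod_cast hN x j
        _ = (1 + (N x : ℝ) ^ 2) ^ d := by simp
    have hexp : (1 + (N x : ℝ) ^ 2) ^ (-s) = ((1 + (N x : ℝ) ^ 2) ^ d) ^ (-p) := by
      rw [← Real.rpow_natCast (1 + (N x : ℝ) ^ 2) d, ← Real.rpow_mul (by positivity), mul_neg,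
        show (d : ℝ) * p = s from mul_div_cancel₀ s hd'.ne']
    rw [← ENNReal.ofReal_prod_of_nonneg fun j _ => by positivity, hexp,
      Real.finsetProd_rpow _ _ fun j _ => by positivity]
    exact ENNReal.ofReal_le_ofReal (Real.rpow_le_rpow_of_nonpos
      (Finset.prod_pos fun j _ => by positivity) hprod (by linarith))
  have ha : ∑' m, a m ≠ ⊤ := by
    rw [← ENNReal.ofReal_tsum_of_nonneg (fun m => by positivity)
      (summable_one_add_sq_rpow_neg hp)]
    exact ENNReal.ofReal_ne_top
  refine ne_top_of_le_ne_top ?_ ((ENNReal.tsum_le_tsum hpoint).trans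
    (ENNReal.tsum_comp_le_tsum_of_injective hι fun n => ∏ j, a (n j)))
  rw [ENNReal.tsum_pi_prod]
  exact ENNReal.pow_ne_top ha

end LatticeSums

section OrderWeight

variable {Q : ℕ} {s : ℝ}

noncomputable def orderWeight (Q : ℕ) (s : ℝ) (k : ℂ) : ℝ≥0∞ :=
  ENNReal.ofReal ((1 + (Nord Q k : ℝ) ^ 2) ^ (s / 2))

theorem orderWeight_ne_zero (k : ℂ) : orderWeight Q s k ≠ 0 :=
  (ENNReal.ofReal_pos.mpr (by positivity)).ne'

theorem orderWeight_ne_top (k : ℂ) : orderWeight Q s k ≠ ⊤ := ENNReal.ofReal_ne_top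

theorem orderWeight_inv_sq (k : ℂ) :
    (orderWeight Q s k)⁻¹ ^ 2 = ENNReal.ofReal ((1 + (Nord Q k : ℝ) ^ 2) ^ (-s)) := by
  rw [orderWeight, ← ENNReal.ofReal_inv_of_pos (by positivity),
    ← ENNReal.ofReal_pow (by positivity),
    ← Real.rpow_neg (by positivity), ← Real.rpow_natCast, ← Real.rpow_mul (by positivity)]
  ring_nf

theorem one_add_sq_rpow_half_le {x y z : ℝ} (hx : 0 ≤ x) (hy : 0 ≤ y) (hz : 0 ≤ z)
    (hxyz : z ≤ x + y) (hs : 0 ≤ s) :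
    (1 + z ^ 2) ^ (s / 2) ≤ 2 ^ s * ((1 + x ^ 2) ^ (s / 2) + (1 + y ^ 2) ^ (s / 2)) := by
  have hmax : 1 + z ^ 2 ≤ 4 * max (1 + x ^ 2) (1 + y ^ 2) := by
    rcases le_total x y with h | h
    · rw [max_eq_right (by nlinarith)]; nlinarith
    · rw [max_eq_left (by nlinarith)]; nlinarith
  calc (1 + z ^ 2) ^ (s / 2)
      ≤ (4 * max (1 + x ^ 2) (1 + y ^ 2)) ^ (s / 2) := by gcongr
    _ = 2 ^ s * max ((1 + x ^ 2) ^ (s / 2)) ((1 + y ^ 2) ^ (s / 2)) := by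
      rw [Real.mul_rpow (by norm_num) (by positivity), Real.rpow_max (by positivity)
        (by positivity) (by positivity), show (4 : ℝ) = 2 ^ (2 : ℝ) by norm_num,
        ← Real.rpow_mul (by norm_num)]
      ring_nf
    _ ≤ 2 ^ s * ((1 + x ^ 2) ^ (s / 2) + (1 + y ^ 2) ^ (s / 2)) := by
      gcongr
      exact max_le (le_add_of_nonneg_right (by positivity)) (le_add_of_nonneg_left (by positivity))

theorem orderWeight_add_le (hs : 0 ≤ s) {k k' : ℂ} (hk : k ∈ Qlattice Q) (hk' : k' ∈ Qlattice Q) :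
    orderWeight Q s (k + k') ≤
      ENNReal.ofReal (2 ^ s) * (orderWeight Q s k + orderWeight Q s k') := by
  rw [orderWeight, orderWeight, orderWeight, ← ENNReal.ofReal_add (by positivity) (by positivity),
    ← ENNReal.ofReal_mul (by positivity)]
  exact ENNReal.ofReal_le_ofReal (one_add_sq_rpow_half_le (Nat.cast_nonneg _) (Nat.cast_nonneg _)
    (Nat.cast_nonneg _) (by exact_mod_cast Nord_add_le hk hk') hs)

theorem HnormSq_eq_tsum_indicator (h : ℂ → ℂ) :
    HnormSq Q s h = ∑' k, (Qlattice Q).indicator (fun k => (orderWeight Q s k * ‖h k‖ₑ) ^ 2) k := by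
  have hterm : ∀ k, ENNReal.ofReal ((1 + (Nord Q k : ℝ) ^ 2) ^ s * ‖h k‖ ^ 2) =
      (orderWeight Q s k * ‖h k‖ₑ) ^ 2 := by
    intro k
    rw [orderWeight, ← ofReal_norm, ← ENNReal.ofReal_mul (by positivity),
      ← ENNReal.ofReal_pow (by positivity), mul_pow,
      ← Real.rpow_natCast ((1 + (Nord Q k : ℝ) ^ 2) ^ (s / 2)) 2,
      ← Real.rpow_mul (by positivity)]
    ring_nf
  simp only [HnormSq, hterm]
  exact tsum_subtype (Qlattice Q) fun k => (orderWeight Q s k * ‖h k‖ₑ) ^ 2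

theorem HnormSq_le_tsum (h : ℂ → ℂ) : HnormSq Q s h ≤ ∑' k, (orderWeight Q s k * ‖h k‖ₑ) ^ 2 :=
  (HnormSq_eq_tsum_indicator h).trans_le
    (ENNReal.tsum_le_tsum fun k => Set.indicator_le_self _ _ k)

theorem HnormSq_eq_tsum {h : ℂ → ℂ} (hh : support h ⊆ Qlattice Q) :
    HnormSq Q s h = ∑' k, (orderWeight Q s k * ‖h k‖ₑ) ^ 2 := by
  rw [HnormSq_eq_tsum_indicator, Set.indicator_eq_self.mpr]
  exact support_subset_iff'.mpr fun k hk => by simp [notMem_support.mp (mt (@hh k) hk)]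

theorem enorm_conv_le (f g : ℂ → ℂ) (K : ℂ) :
    ‖conv f g K‖ₑ ≤ ∑' k, ‖f k‖ₑ * ‖g (K - k)‖ₑ := by
  simpa only [conv, enorm_mul] using enorm_tsum_le_tsum_enorm (f := fun k => f k * g (K - k))

theorem HnormSq_conv_le (hs : 0 ≤ s) {f g : ℂ → ℂ} (hf : support f ⊆ Qlattice Q)
    (hg : support g ⊆ Qlattice Q) :
    HnormSq Q s (conv f g) ≤
      4 * ENNReal.ofReal (2 ^ s) ^ 2 *
        (∑' k, (Qlattice Q).indicator (fun k => (orderWeight Q s k)⁻¹ ^ 2) k) *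
        (HnormSq Q s f * HnormSq Q s g) := by
  have henorm_zero : ∀ {h : ℂ → ℂ}, support h ⊆ Qlattice Q → ∀ k ∉ Qlattice Q, ‖h k‖ₑ = 0 :=
    fun hh k hk => enorm_eq_zero.mpr (notMem_support.mp (mt (@hh k) hk))
  rw [HnormSq_eq_tsum hf, HnormSq_eq_tsum hg]
  calc HnormSq Q s (conv f g)
      ≤ ∑' K, (orderWeight Q s K * ‖conv f g K‖ₑ) ^ 2 := HnormSq_le_tsum _
    _ ≤ ∑' K, (orderWeight Q s K * ∑' k, ‖f k‖ₑ * ‖g (K - k)‖ₑ) ^ 2 := by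
      gcongr with K
      exact enorm_conv_le f g K
    _ ≤ _ := tsum_weight_mul_conv_sq_le (fun k hk k' hk' => orderWeight_add_le hs hk hk')
      orderWeight_ne_zero orderWeight_ne_top (henorm_zero hf) (henorm_zero hg)

theorem tsum_orderWeight_inv_sq_ne_top {d : ℕ} (hd : 0 < d) (hs : (d : ℝ) < 2 * s) :
    ∑' k, (Qlattice (d + d)).indicator (fun k => (orderWeight (d + d) s k)⁻¹ ^ 2) k ≠ ⊤ := by
  obtain ⟨ι, hι, hN⟩ := exists_injective_int_coords d
  rw [← tsum_subtype]
  simp only [orderWeight_inv_sq]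
  exact tsum_one_add_sq_rpow_neg_ne_top hd (fun k : Qlattice (d + d) => Nord (d + d) k) ι hι hN hs

end OrderWeight

/-- for s > Q/4, H_s is a Banach algebra:
‖UV‖_s ≤ c_s ‖U‖_s ‖V‖_s. -/
theorem stmt_10 (Q : ℕ) (hQ : 8 ≤ Q) (hQeven : Even Q) (s : ℝ) (hs : (Q : ℝ) / 4 < s) :
    ∃ c > (0 : ℝ), ∀ f g : ℂ → ℂ,
      Function.support f ⊆ Qlattice Q → Function.support g ⊆ Qlattice Q →
      HnormSq Q s (conv f g) ^ (1 / 2 : ℝ) ≤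
        ENNReal.ofReal c * HnormSq Q s f ^ (1 / 2 : ℝ) * HnormSq Q s g ^ (1 / 2 : ℝ) := by
  obtain ⟨d, rfl⟩ := hQeven
  have hsd : (d : ℝ) < 2 * s := by push_cast at hs; linarith
  have hS := tsum_orderWeight_inv_sq_ne_top (s := s) (by omega : 0 < d) hsd
  obtain ⟨c, hc, hM⟩ := ENNReal.exists_pos_le_ofReal_sq
    (ENNReal.mul_ne_top (by finiteness : 4 * ENNReal.ofReal (2 ^ s) ^ 2 ≠ ⊤) hS)
  refine ⟨c, hc, fun f g hf hg => ENNReal.rpow_half_le_of_le_sq_mul ?_⟩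
  exact (HnormSq_conv_le (by linarith [d.cast_nonneg (α := ℝ)]) hf hg).trans (by gcongr)
end

section
/- For any integer l ≥ 1 and any n ≥ 0, the sum Π_{2,n} = Σ_{k=0}^n (k!(n-k)!)^{4l} satisfies Π_{2,n} ≤ (2 + 1/16)(n!)^{4l}. -/
/-!
The two extreme terms `k = 0` and `k = n` contribute `2 (n!)^p`. For every other `k` we have
`n ≤ n.choose k`, i.e. `k! (n-k)! ≤ n! / n`, so the `n - 1` middle terms together contribute at
most `(n - 1) / n^p · (n!)^p`, and `16 (n - 1) ≤ n^4 ≤ n^p` once `p ≥ 4`.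
-/

open Finset Nat

theorem Nat.le_choose_of_pos_of_lt {n k : ℕ} (hk : 0 < k) (hkn : k < n) : n ≤ n.choose k := by
  induction n generalizing k with
  | zero => omega
  | succ m ih =>
    obtain ⟨j, rfl⟩ := Nat.exists_eq_add_one_of_ne_zero hk.ne'
    rw [choose_succ_succ']
    rcases j.eq_zero_or_pos with rfl | hj
    · simp [add_comm]
    · have hm : m ≤ m.choose j := ih hj (by omega)
      have hpos : 0 < m.choose (j + 1) := choose_pos (by omega)
      omega

theorem Nat.factorial_mul_factorial_mul_le_factorial {n k : ℕ} (hk : 0 < k) (hkn : k < n) :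
    k ! * (n - k)! * n ≤ n ! :=
  calc k ! * (n - k)! * n ≤ k ! * (n - k)! * n.choose k :=
        Nat.mul_le_mul_left _ (le_choose_of_pos_of_lt hk hkn)
    _ = n ! := by rw [mul_comm, ← mul_assoc, choose_mul_factorial_mul_factorial hkn.le]

theorem Finset.sum_range_succ_eq_add_add_sum_Ioo {M : Type*} [AddCommMonoid M] (f : ℕ → M)
    {n : ℕ} (hn : 0 < n) : ∑ k ∈ range (n + 1), f k = f 0 + f n + ∑ k ∈ Ioo 0 n, f k := by
  rw [range_succ_eq_Icc_zero, ← Ioc_insert_left n.zero_le, ← Ioo_insert_right hn,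
    sum_insert (by simp [hn.ne]), sum_insert (by simp), add_assoc]

theorem sum_Ioo_factorial_mul_factorial_pow_mul_le (n p : ℕ) :
    (∑ k ∈ Ioo 0 n, (k ! * (n - k)!) ^ p) * n ^ p ≤ (n - 1) * n ! ^ p :=
  calc (∑ k ∈ Ioo 0 n, (k ! * (n - k)!) ^ p) * n ^ p
      = ∑ k ∈ Ioo 0 n, (k ! * (n - k)! * n) ^ p := by simp only [sum_mul, mul_pow]
    _ ≤ ∑ _k ∈ Ioo 0 n, n ! ^ p := sum_le_sum fun k hk => by
        rw [mem_Ioo] at hk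
        exact Nat.pow_le_pow_left (factorial_mul_factorial_mul_le_factorial hk.1 hk.2) p
    _ = (n - 1) * n ! ^ p := by simp

theorem sixteen_mul_sub_one_le_pow {n p : ℕ} (hn : 0 < n) (hp : 4 ≤ p) :
    16 * (n - 1) ≤ n ^ p := by
  have h4 : 16 * (n - 1) ≤ n ^ 4 := by
    obtain ⟨m, rfl⟩ := Nat.exists_eq_add_one_of_ne_zero hn.ne'
    have hsq : 4 * m ≤ (m + 1) ^ 2 := by nlinarith [sq_nonneg ((m : ℤ) - 1)]
    calc 16 * (m + 1 - 1) ≤ (4 * m) ^ 2 := by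
          rw [Nat.add_sub_cancel]; nlinarith [Nat.le_mul_self m]
      _ ≤ ((m + 1) ^ 2) ^ 2 := Nat.pow_le_pow_left hsq 2
      _ = (m + 1) ^ 4 := by ring
  exact h4.trans (Nat.pow_le_pow_right hn hp)

theorem sixteen_mul_sum_factorial_mul_factorial_pow_le {p : ℕ} (hp : 4 ≤ p) (n : ℕ) :
    16 * ∑ k ∈ range (n + 1), (k ! * (n - k)!) ^ p ≤ 33 * n ! ^ p := by
  rcases n.eq_zero_or_pos with rfl | hn
  · simp
  have hmiddle : 16 * ∑ k ∈ Ioo 0 n, (k ! * (n - k)!) ^ p ≤ n ! ^ p := by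
    refine Nat.le_of_mul_le_mul_right ?_ (pow_pos hn p)
    calc 16 * (∑ k ∈ Ioo 0 n, (k ! * (n - k)!) ^ p) * n ^ p
        ≤ 16 * ((n - 1) * n ! ^ p) := by
          rw [mul_assoc]
          exact Nat.mul_le_mul_left _ (sum_Ioo_factorial_mul_factorial_pow_mul_le n p)
      _ = 16 * (n - 1) * n ! ^ p := by ring
      _ ≤ n ^ p * n ! ^ p := Nat.mul_le_mul_right _ (sixteen_mul_sub_one_le_pow hn hp)
      _ = n ! ^ p * n ^ p := mul_comm _ _
  rw [sum_range_succ_eq_add_add_sum_Ioo _ hn]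
  simp only [factorial_zero, Nat.sub_zero, Nat.sub_self, one_mul, mul_one] at hmiddle ⊢
  omega

/-- Π_{2,n} = Σ_{k=0}^n (k!(n-k)!)^{4l} ≤ (2 + 1/16)(n!)^{4l}. -/
theorem stmt_12 (l : ℕ) (hl : 1 ≤ l) (n : ℕ) :
    (∑ k ∈ Finset.range (n + 1),
        ((Nat.factorial k * Nat.factorial (n - k) : ℕ) : ℝ) ^ (4 * l)) ≤
      (2 + 1 / 16) * ((Nat.factorial n : ℕ) : ℝ) ^ (4 * l) := by
  have h : ((16 * ∑ k ∈ range (n + 1), (k ! * (n - k)!) ^ (4 * l) : ℕ) : ℝ)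
      ≤ ((33 * n ! ^ (4 * l) : ℕ) : ℝ) :=
    Nat.cast_le.mpr (sixteen_mul_sum_factorial_mul_factorial_pow_le (by omega) n)
  push_cast at h ⊢
  linarith
end

section
/- For any integer l ≥ 1 and any n ≥ 2, the sum Π'_{2,n} = Σ_{k=1}^{n-1} (k!(n-k)!)^{4l} satisfies Π'_{2,n} ≤ 3((n-1)!)^{4l}. -/
/-!
The two extreme terms `k = 1` and `k = n - 1` both equal `((n-1)!)^m`. For the `n - 3` interior
terms, `k! (n-k)! ≤ 2 (n-2)!`, and `(n - 3) 2^m ≤ (n - 1)^m` as soon as `m ≥ 2`, so together they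
contribute at most one more `((n-1)!)^m`.
-/

open Finset Nat

theorem factorial_add_two_mul_factorial_add_two_le (a b : ℕ) :
    (a + 2)! * (b + 2)! ≤ 2 * (a + b + 2)! := by
  induction b with
  | zero => simp [factorial, mul_comm]
  | succ b ih =>
    calc (a + 2)! * (b + 1 + 2)! = (b + 3) * ((a + 2)! * (b + 2)!) := by
          rw [show b + 1 + 2 = b + 2 + 1 from rfl, factorial_succ (b + 2)]; ring
      _ ≤ (a + b + 3) * (2 * (a + b + 2)!) := Nat.mul_le_mul (by omega) ih
      _ = 2 * (a + (b + 1) + 2)! := by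
          rw [show a + (b + 1) + 2 = a + b + 2 + 1 by omega, factorial_succ (a + b + 2)]; ring

theorem mul_two_pow_le_add_two_pow (i : ℕ) {m : ℕ} (hm : 2 ≤ m) : i * 2 ^ m ≤ (i + 2) ^ m := by
  obtain ⟨p, rfl⟩ : ∃ p, m = p + 2 := ⟨m - 2, by omega⟩
  have hsq : 4 * i ≤ (i + 2) ^ 2 := by nlinarith
  calc i * 2 ^ (p + 2) = 2 ^ p * (4 * i) := by ring
    _ ≤ (i + 2) ^ p * (i + 2) ^ 2 := Nat.mul_le_mul (Nat.pow_le_pow_left (by omega) p) hsq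
    _ = (i + 2) ^ (p + 2) := by ring

theorem sum_Icc_two_factorial_mul_factorial_pow_le (i : ℕ) {m : ℕ} (hm : 2 ≤ m) :
    ∑ k ∈ Icc 2 (i + 1), (k ! * (i + 3 - k)!) ^ m ≤ (i + 2)! ^ m := by
  have hterm : ∀ k ∈ Icc 2 (i + 1), (k ! * (i + 3 - k)!) ^ m ≤ (2 * (i + 1)!) ^ m := by
    intro k hk
    obtain ⟨a, rfl⟩ : ∃ a, k = a + 2 := ⟨k - 2, by grind⟩
    obtain ⟨b, hb⟩ : ∃ b, i + 3 - (a + 2) = b + 2 := ⟨i - a - 1, by grind⟩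
    rw [hb, show i + 1 = a + b + 2 by grind]
    exact Nat.pow_le_pow_left (factorial_add_two_mul_factorial_add_two_le a b) m
  calc ∑ k ∈ Icc 2 (i + 1), (k ! * (i + 3 - k)!) ^ m
      ≤ ∑ _k ∈ Icc 2 (i + 1), (2 * (i + 1)!) ^ m := sum_le_sum hterm
    _ = i * 2 ^ m * (i + 1)! ^ m := by simp [mul_pow, mul_assoc]
    _ ≤ (i + 2) ^ m * (i + 1)! ^ m := Nat.mul_le_mul_right _ (mul_two_pow_le_add_two_pow i hm)
    _ = (i + 2)! ^ m := by rw [factorial_succ (i + 1), mul_pow]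

theorem sum_Icc_factorial_mul_factorial_pow_le {m : ℕ} (hm : 2 ≤ m) {n : ℕ} (hn : 2 ≤ n) :
    ∑ k ∈ Icc 1 (n - 1), (k ! * (n - k)!) ^ m ≤ 3 * (n - 1)! ^ m := by
  obtain rfl | ⟨i, rfl⟩ : n = 2 ∨ ∃ i, n = i + 3 := by
    rcases Nat.eq_or_lt_of_le hn with h | h
    exacts [.inl h.symm, .inr ⟨n - 3, by omega⟩]
  · simp
  · rw [show i + 3 - 1 = i + 1 + 1 from rfl, sum_Icc_succ_top (by omega),
      ← insert_Icc_add_one_left_eq_Icc (by omega), sum_insert (by simp)]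
    simp only [Nat.reduceAdd, show i + 3 - 1 = i + 2 from rfl, show i + 1 + 1 = i + 2 from rfl,
      show i + 3 - (i + 2) = 1 by omega, factorial_one, one_mul, mul_one]
    have hinterior := sum_Icc_two_factorial_mul_factorial_pow_le i hm
    omega

/-- Π'_{2,n} = Σ_{k=1}^{n-1} (k!(n-k)!)^{4l} ≤ 3((n-1)!)^{4l} for n ≥ 2. -/
theorem stmt_13 (l : ℕ) (hl : 1 ≤ l) (n : ℕ) (hn : 2 ≤ n) :
    (∑ k ∈ Finset.Icc 1 (n - 1),
        ((Nat.factorial k * Nat.factorial (n - k) : ℕ) : ℝ) ^ (4 * l)) ≤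
      3 * ((Nat.factorial (n - 1) : ℕ) : ℝ) ^ (4 * l) := by
  exact_mod_cast sum_Icc_factorial_mul_factorial_pow_le (m := 4 * l) (by omega) hn
end

section
/- For any integer l ≥ 1 and any n ≥ 1, the sum Π_{3,n} = Σ_{k+m+r=n, k,m,r≥0} (k!m!r!)^{4l} over ordered triples of nonnegative integers summing to n satisfies Π_{3,n} ≤ 4(n!)^{4l}. -/
/-!
Write `A = (n!)^p`. The term of a triple `(k, m, r)` equals `A` when one of its parts is `n`
(three triples), and is at most `A / n^p` otherwise: then some part `a` satisfies `0 < a < n`,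
so `n ≤ C(n, a)` and `n · k! m! r! ≤ C(n, a) · a! (n - a)! = n!`. There are at most `n²` triples
of the second kind, so for `p ≥ 2` they contribute at most `A` in total.
-/

open Finset Nat

theorem Nat.factorial_mul_factorial_mul_factorial_le (a b c : ℕ) :
    a ! * b ! * c ! ≤ (a + b + c)! :=
  calc a ! * b ! * c ! ≤ (a + b)! * c ! := by
        gcongr; exact le_of_dvd (factorial_pos _) (factorial_mul_factorial_dvd_factorial_add a b)
    _ ≤ (a + b + c)! := le_of_dvd (factorial_pos _) (factorial_mul_factorial_dvd_factorial_add _ c)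

theorem Nat.mul_factorial_mul_factorial_mul_factorial_le {a b c : ℕ} (ha : 0 < a)
    (hbc : 0 < b + c) : (a + b + c) * (a ! * b ! * c !) ≤ (a + b + c)! := by
  have hchoose : a + b + c ≤ (a + b + c).choose a := le_choose_of_pos_of_lt ha (by omega)
  have hsub : a + b + c - a = b + c := by omega
  calc (a + b + c) * (a ! * b ! * c !)
      ≤ (a + b + c).choose a * (a ! * (b + c)!) := by
        rw [mul_assoc a !]
        gcongr
        simpa using factorial_mul_factorial_mul_factorial_le 0 b c
    _ = (a + b + c)! := by
        rw [← mul_assoc, ← hsub, choose_mul_factorial_mul_factorial (by omega)]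

theorem Nat.mul_factorial_mul_factorial_mul_factorial_le_of_ne {a b c n : ℕ}
    (h : a + b + c = n) (ha : a ≠ n) (hb : b ≠ n) (hc : c ≠ n) :
    n * (a ! * b ! * c !) ≤ n ! := by
  subst h
  rcases Nat.eq_zero_or_pos a with rfl | ha
  · simpa [mul_comm] using mul_factorial_mul_factorial_mul_factorial_le (a := b) (b := 0) (c := c)
      (by omega) (by omega)
  · exact mul_factorial_mul_factorial_mul_factorial_le ha (by omega)

/-- The pairs `(k, m)` with `k + m ≤ n`, standing for the triples `(k, m, n - k - m)`. -/
def triangle (n : ℕ) : Finset (Σ _ : ℕ, ℕ) :=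
  (range (n + 1)).sigma fun k => range (n + 1 - k)

def corners (n : ℕ) : Finset (Σ _ : ℕ, ℕ) :=
  {⟨n, 0⟩, ⟨0, n⟩, ⟨0, 0⟩}

theorem sum_inter_corners_le (n p : ℕ) :
    ∑ x ∈ triangle n ∩ corners n, (x.1 ! * x.2 ! * (n - x.1 - x.2)!) ^ p ≤ 3 * n ! ^ p :=
  calc _ ≤ #(triangle n ∩ corners n) • n ! ^ p := by
        refine sum_le_card_nsmul _ _ _ fun x hx => ?_
        simp only [triangle, mem_inter, mem_sigma, mem_range] at hx
        have hparts : x.1 + x.2 + (n - x.1 - x.2) = n := by omega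
        gcongr
        simpa [hparts] using factorial_mul_factorial_mul_factorial_le x.1 x.2 (n - x.1 - x.2)
    _ ≤ 3 * n ! ^ p := by
        rw [smul_eq_mul]
        gcongr
        exact (card_le_card inter_subset_right).trans card_le_three

theorem sum_sdiff_corners_le {p : ℕ} (hp : 2 ≤ p) (n : ℕ) :
    ∑ x ∈ triangle n \ corners n, (x.1 ! * x.2 ! * (n - x.1 - x.2)!) ^ p ≤ n ! ^ p := by
  set S := triangle n \ corners n
  have mem_S : ∀ {k m : ℕ}, ⟨k, m⟩ ∈ S ↔ k + m ≤ n ∧ k ≠ n ∧ m ≠ n ∧ k + m ≠ 0 := by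
    intro k m
    simp only [S, triangle, corners, mem_sdiff, mem_sigma, mem_range, mem_insert, mem_singleton,
      Sigma.mk.injEq, heq_eq_eq]
    omega
  rcases S.eq_empty_or_nonempty with hS | ⟨⟨k, m⟩, hkm⟩
  · simp [hS]
  have hn : 0 < n := by
    rw [mem_S] at hkm
    omega
  have hterm : ∀ x ∈ S, n ^ p * (x.1 ! * x.2 ! * (n - x.1 - x.2)!) ^ p ≤ n ! ^ p := by
    rintro ⟨k, m⟩ hx
    rw [mem_S] at hx
    dsimp only
    rw [← mul_pow]
    gcongr
    exact mul_factorial_mul_factorial_mul_factorial_le_of_ne (by omega) hx.2.1 hx.2.2.1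
      (by omega)
  have hcard : #S ≤ n ^ p :=
    calc #S ≤ #((range n).sigma fun _ => range n) := by
          refine card_le_card fun ⟨k, m⟩ hx => ?_
          rw [mem_S] at hx
          simp only [mem_sigma, mem_range]
          omega
      _ = n ^ 2 := by simp [Finset.card_sigma, sq]
      _ ≤ n ^ p := pow_le_pow_right₀ hn hp
  refine le_of_mul_le_mul_left ?_ (pow_pos hn p)
  calc n ^ p * ∑ x ∈ S, (x.1 ! * x.2 ! * (n - x.1 - x.2)!) ^ p ≤ #S • n ! ^ p := by
        rw [mul_sum]
        exact sum_le_card_nsmul _ _ _ hterm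
    _ ≤ n ^ p * n ! ^ p := by
        rw [smul_eq_mul]
        gcongr

theorem sum_triangle_factorial_pow_le {p : ℕ} (hp : 2 ≤ p) (n : ℕ) :
    ∑ x ∈ triangle n, (x.1 ! * x.2 ! * (n - x.1 - x.2)!) ^ p ≤ 4 * n ! ^ p := by
  rw [← sum_inter_add_sum_sdiff _ (corners n)]
  have := sum_inter_corners_le n p
  have := sum_sdiff_corners_le hp n
  omega

theorem stmt_14_general (l : ℕ) (hl : 1 ≤ l) (n : ℕ) :
    (∑ k ∈ Finset.range (n + 1), ∑ m ∈ Finset.range (n + 1 - k),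
        ((Nat.factorial k * Nat.factorial m * Nat.factorial (n - k - m) : ℕ) : ℝ)
          ^ (4 * l)) ≤
      4 * ((Nat.factorial n : ℕ) : ℝ) ^ (4 * l) := by
  have h := sum_triangle_factorial_pow_le (p := 4 * l) (by omega) n
  exact_mod_cast (sum_sigma' (range (n + 1)) (fun k => range (n + 1 - k))
    fun k m => (k ! * m ! * (n - k - m)!) ^ (4 * l)).trans_le h

/-- Π_{3,n} = Σ_{k+m+r=n} (k!m!r!)^{4l} ≤ 4(n!)^{4l} for n ≥ 1,
the sum being over ordered triples of nonnegative integers with k+m+r = n. -/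
theorem stmt_14 (l : ℕ) (hl : 1 ≤ l) (n : ℕ) (hn : 1 ≤ n) :
    (∑ k ∈ Finset.range (n + 1), ∑ m ∈ Finset.range (n + 1 - k),
        ((Nat.factorial k * Nat.factorial m * Nat.factorial (n - k - m) : ℕ) : ℝ)
          ^ (4 * l)) ≤
      4 * ((Nat.factorial n : ℕ) : ℝ) ^ (4 * l) :=
  stmt_14_general l hl n
end

section
/- Let û be analytic on the disc {|z| < 1/K₁} with û(0) = 0, let K' > K₁, and define (L_{K'}û)(ν) = (1/ν)∫₀^{1/K'} e^{-z/ν} û(z) dz and the (truncated-domain) triple convolution of û with itself corresponding to the Borel transform of the cube. Then for 0 < ν < 1/K': |(L_{K'}(û*û*û))(ν) - ((L_{K'}û)(ν))³| ≤ e^{-1/(K'ν)}/(K'ν)³ · ||û||₀(||û||₀ + ν||û||₁)², where ||û||₀ = sup_{(0,1/K')}|û| and ||û||₁ = sup_{(0,1/K')}|û'|. Here (L_{K'}(û*û*û))(ν) = (1/ν)∫_{D_{K'}} e^{-(z₁+z₂+z₃)/ν} û'(z₁)û'(z₂)û(z₃) dz₁dz₂dz₃ with D_{K'} = {z₁,z₂,z₃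 > 0 : z₁+z₂+z₃ < 1/K'}. -/
/-!
Write `E x = exp (-x / ν)`, `a = 1 / K'`, `F = E û'` and `H = E û` on `[0, a]`. The triple
integral is the iterated truncated convolution `F ⋆ F ⋆ H` at `a`; it differs from
`(∫F)² (∫H)` (the integral over the whole cube `[0, a]³`) by an integral over the part of the
cube outside the simplex, where `E z₁ E z₂ E z₃ ≤ E a`, so the difference is at most
`M₁² M₀ a³ E a`. Integration by parts and `û 0 = 0` give `∫F = E a û(a) + ν⁻¹ ∫H`, hence
`ν⁻¹ (∫F)² (∫H) - (ν⁻¹ ∫H)³ = (∫F - ν⁻¹∫H)(∫F + ν⁻¹∫H) ν⁻¹∫H` is of size `E a` as well.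
-/

open Set intervalIntegral

noncomputable def truncConv (G Q : ℝ → ℂ) (b : ℝ) : ℂ :=
  ∫ z in (0 : ℝ)..b, G z * Q (b - z)

theorem continuous_truncConv {G Q : ℝ → ℂ} (hG : Continuous G) (hQ : Continuous Q) :
    Continuous (truncConv G Q) :=
  continuous_parametric_intervalIntegral_of_continuous (by fun_prop) continuous_id

theorem integral_simplex_eq_truncConv {a : ℝ} (ha : 0 ≤ a) {f : ℝ → ℝ → ℝ → ℂ}
    {F G H : ℝ → ℂ} (hf : ∀ z₁ z₂ z₃, 0 ≤ z₁ → 0 ≤ z₂ → 0 ≤ z₃ → z₁ + z₂ + z₃ ≤ a →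
      f z₁ z₂ z₃ = F z₁ * G z₂ * H z₃) :
    ∫ z₁ in (0 : ℝ)..a, ∫ z₂ in (0 : ℝ)..(a - z₁), ∫ z₃ in (0 : ℝ)..(a - z₁ - z₂), f z₁ z₂ z₃ =
      truncConv F (truncConv G (truncConv H fun _ => 1)) a := by
  refine integral_congr fun z₁ hz₁ => ?_
  rw [uIcc_of_le ha] at hz₁
  simp only [truncConv, ← integral_const_mul]
  refine integral_congr fun z₂ hz₂ => ?_
  rw [uIcc_of_le (by linarith [hz₁.2])] at hz₂
  refine integral_congr fun z₃ hz₃ => ?_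
  rw [uIcc_of_le (by linarith [hz₂.2])] at hz₃
  rw [hf z₁ z₂ z₃ hz₁.1 hz₂.1 hz₃.1 (by linarith [hz₃.2])]
  ring

theorem norm_integral_le_of_norm_le_mul_exp {G : ℝ → ℂ} {a ν B : ℝ} (ha : 0 ≤ a) (hν : 0 ≤ ν)
    (hGb : ∀ x ∈ Icc 0 a, ‖G x‖ ≤ B * Real.exp (-x / ν)) :
    ‖∫ x in (0 : ℝ)..a, G x‖ ≤ B * a := by
  refine (norm_integral_le_of_norm_le_const fun x hx => ?_).trans_eq
    (by rw [sub_zero, abs_of_nonneg ha])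
  rw [uIoc_of_le ha] at hx
  have hGx := hGb x (Ioc_subset_Icc_self hx)
  have hB : 0 ≤ B := nonneg_of_mul_nonneg_left ((norm_nonneg _).trans hGx) (Real.exp_pos _)
  calc ‖G x‖ ≤ B * Real.exp (-x / ν) := hGx
    _ ≤ B * 1 := by
      gcongr
      exact Real.exp_le_one_iff.2 (div_nonpos_of_nonpos_of_nonneg (by linarith [hx.1]) hν)
    _ = B := mul_one B

theorem norm_integral_mul_le {G : ℝ → ℂ} {a ν B D : ℝ} {q : ℂ} (ha : 0 ≤ a) (hν : 0 ≤ ν)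
    (hGb : ∀ x ∈ Icc 0 a, ‖G x‖ ≤ B * Real.exp (-x / ν)) (hq : ‖q‖ ≤ D) :
    ‖(∫ x in (0 : ℝ)..a, G x) * q‖ ≤ B * D * a := by
  have hG := norm_integral_le_of_norm_le_mul_exp ha hν hGb
  rw [norm_mul, mul_right_comm]
  exact mul_le_mul hG hq (norm_nonneg _) ((norm_nonneg _).trans hG)

theorem norm_truncConv_sub_le {G Q : ℝ → ℂ} (hG : Continuous G) (hQ : Continuous Q)
    {a b ν B D : ℝ} {q : ℂ} (hν : 0 ≤ ν) (hb : b ∈ Icc 0 a)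
    (hGb : ∀ x ∈ Icc 0 a, ‖G x‖ ≤ B * Real.exp (-x / ν))
    (hQb : ∀ c ∈ Icc 0 a, ‖Q c - q‖ ≤ D * Real.exp (-c / ν)) (hq : ‖q‖ ≤ D) :
    ‖truncConv G Q b - (∫ x in (0 : ℝ)..a, G x) * q‖ ≤ B * D * a * Real.exp (-b / ν) := by
  obtain ⟨hb₀, hba⟩ := hb
  have hsplit : truncConv G Q b - (∫ x in (0 : ℝ)..a, G x) * q =
      (∫ z in (0 : ℝ)..b, G z * (Q (b - z) - q)) - ∫ z in b..a, G z * q := by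
    rw [← integral_add_adjacent_intervals (hG.intervalIntegrable 0 b)
      (hG.intervalIntegrable b a), add_mul, ← integral_mul_const, ← integral_mul_const,
      truncConv]
    simp only [mul_sub]
    rw [integral_sub (by apply Continuous.intervalIntegrable; fun_prop)
      (by apply Continuous.intervalIntegrable; fun_prop)]
    ring
  have hnear : ‖∫ z in (0 : ℝ)..b, G z * (Q (b - z) - q)‖ ≤ B * D * Real.exp (-b / ν) * b := by
    refine (norm_integral_le_of_norm_le_const fun z hz => ?_).trans_eq
      (by rw [sub_zero, abs_of_nonneg hb₀])
    rw [uIoc_of_le hb₀] at hz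
    have hGz := hGb z ⟨hz.1.le, hz.2.trans hba⟩
    rw [norm_mul]
    calc ‖G z‖ * ‖Q (b - z) - q‖
        ≤ B * Real.exp (-z / ν) * (D * Real.exp (-(b - z) / ν)) :=
          mul_le_mul hGz (hQb _ ⟨by linarith [hz.2], by linarith [hz.1]⟩) (norm_nonneg _)
            ((norm_nonneg _).trans hGz)
      _ = B * D * Real.exp (-b / ν) := by rw [mul_mul_mul_comm, ← Real.exp_add]; ring_nf
  have hfar : ‖∫ z in b..a, G z * q‖ ≤ B * D * Real.exp (-b / ν) * (a - b) := by
    refine (norm_integral_le_of_norm_le_const fun z hz => ?_).trans_eq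
      (by rw [abs_of_nonneg (sub_nonneg.2 hba)])
    rw [uIoc_of_le hba] at hz
    have hGz := hGb z ⟨hb₀.trans hz.1.le, hz.2⟩
    have hB : 0 ≤ B := nonneg_of_mul_nonneg_left ((norm_nonneg _).trans hGz) (Real.exp_pos _)
    rw [norm_mul]
    calc ‖G z‖ * ‖q‖ ≤ B * Real.exp (-z / ν) * D :=
          mul_le_mul hGz hq (norm_nonneg _) ((norm_nonneg _).trans hGz)
      _ ≤ B * D * Real.exp (-b / ν) := by
        rw [mul_right_comm]
        exact mul_le_mul_of_nonneg_left (by gcongr; exact hz.1.le)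
          (mul_nonneg hB ((norm_nonneg _).trans hq))
  calc _ ≤ _ := hsplit ▸ norm_sub_le _ _
    _ ≤ _ := add_le_add hnear hfar
    _ = _ := by ring

theorem norm_truncConv_truncConv_sub_le {F G H : ℝ → ℂ} (hF : Continuous F)
    (hG : Continuous G) (hH : Continuous H) {a ν A B C : ℝ} (ha : 0 ≤ a) (hν : 0 ≤ ν)
    (hFb : ∀ x ∈ Icc 0 a, ‖F x‖ ≤ A * Real.exp (-x / ν))
    (hGb : ∀ x ∈ Icc 0 a, ‖G x‖ ≤ B * Real.exp (-x / ν))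
    (hHb : ∀ x ∈ Icc 0 a, ‖H x‖ ≤ C * Real.exp (-x / ν)) :
    ‖truncConv F (truncConv G (truncConv H fun _ => 1)) a -
        (∫ x in (0 : ℝ)..a, F x) * (∫ x in (0 : ℝ)..a, G x) * ∫ x in (0 : ℝ)..a, H x‖ ≤
      A * B * C * a ^ 3 * Real.exp (-a / ν) := by
  have hOne : ∀ c ∈ Icc 0 a, ‖(fun _ : ℝ => (1 : ℂ)) c - 1‖ ≤ 1 * Real.exp (-c / ν) :=
    fun c _ => by simp [(Real.exp_pos _).le]
  have hS : Continuous (truncConv H fun _ => 1) := continuous_truncConv hH continuous_const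
  have h₁ : ∀ c ∈ Icc 0 a, ‖truncConv H (fun _ => 1) c - (∫ x in (0 : ℝ)..a, H x) * 1‖ ≤
      C * 1 * a * Real.exp (-c / ν) := fun c hc =>
    norm_truncConv_sub_le hH continuous_const hν hc hHb hOne (by simp)
  have hH₁ := norm_integral_mul_le (q := 1) (D := 1) ha hν hHb (by simp)
  have h₂ : ∀ c ∈ Icc 0 a, ‖truncConv G (truncConv H fun _ => 1) c -
      (∫ x in (0 : ℝ)..a, G x) * ((∫ x in (0 : ℝ)..a, H x) * 1)‖ ≤
      B * (C * 1 * a) * a * Real.exp (-c / ν) := fun c hc =>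
    norm_truncConv_sub_le hG hS hν hc hGb h₁ hH₁
  have h₃ := norm_truncConv_sub_le hF (continuous_truncConv hG hS) hν ⟨ha, le_rfl⟩ hFb h₂
    (norm_integral_mul_le ha hν hGb hH₁)
  convert h₃ using 1
  · rw [mul_one, mul_assoc]
  · ring

theorem norm_exp_mul_le {f : ℝ → ℂ} {s : Set ℝ} {ν M : ℝ} (hf : ∀ x ∈ s, ‖f x‖ ≤ M) :
    ∀ x ∈ s, ‖(Real.exp (-x / ν) : ℂ) * f x‖ ≤ M * Real.exp (-x / ν) := fun x hx => by
  rw [norm_mul, Complex.norm_real, Real.norm_of_nonneg (Real.exp_pos _).le, mul_comm]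
  exact mul_le_mul_of_nonneg_right (hf x hx) (Real.exp_pos _).le

theorem integral_exp_mul_deriv {u : ℂ → ℂ} {a ν : ℝ}
    (hu : ∀ x ∈ uIcc 0 a, DifferentiableAt ℂ u x)
    (hu' : ContinuousOn (fun x : ℝ => deriv u x) (uIcc 0 a)) :
    ∫ x in (0 : ℝ)..a, (Real.exp (-x / ν) : ℂ) * deriv u x =
      Real.exp (-a / ν) * u a - u 0 + 1 / ν * ∫ x in (0 : ℝ)..a, (Real.exp (-x / ν) : ℂ) * u x := by
  have hexp : ∀ x : ℝ, HasDerivAt (fun y : ℝ => (Real.exp (-y / ν) : ℂ))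
      ((Real.exp (-x / ν) * (-1 / ν) : ℝ) : ℂ) x := fun x =>
    (((hasDerivAt_id x).neg.div_const ν).exp).ofReal_comp
  have hibp := integral_mul_deriv_eq_deriv_mul_of_hasDerivAt
    (fun x _ => (hexp x).continuousAt.continuousWithinAt)
    (fun x hx => (hu x hx).hasDerivAt.comp_ofReal.continuousAt.continuousWithinAt)
    (fun x _ => hexp x)
    (fun x hx => (hu x (Ioo_subset_Icc_self hx)).hasDerivAt.comp_ofReal)
    (by apply Continuous.intervalIntegrable; fun_prop) hu'.intervalIntegrable
  have hderiv : ∫ x in (0 : ℝ)..a, ((Real.exp (-x / ν) * (-1 / ν) : ℝ) : ℂ) * u x =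
      -(1 / ν * ∫ x in (0 : ℝ)..a, (Real.exp (-x / ν) : ℂ) * u x) := by
    rw [← integral_const_mul, ← integral_neg]
    refine integral_congr fun x _ => ?_
    push_cast
    ring
  simp only [hibp, hderiv, neg_zero, zero_div, Real.exp_zero,
    Complex.ofReal_one, one_mul, Complex.ofReal_zero]
  ring

theorem norm_one_div_mul_sub_pow_three_le {T I₀ I₁ w : ℂ} {ν a e M₀ M₁ : ℝ} (hν : 0 < ν)
    (hνa : ν ≤ a) (he : 0 ≤ e) (hM₀ : 0 ≤ M₀) (hM₁ : 0 ≤ M₁) (hI₁ : I₁ = w + 1 / ν * I₀)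
    (hw : ‖w‖ ≤ M₀ * e) (hI₀b : ‖I₀‖ ≤ M₀ * a) (hI₁b : ‖I₁‖ ≤ M₁ * a)
    (hT : ‖T - I₁ * I₁ * I₀‖ ≤ M₁ * M₁ * M₀ * a ^ 3 * e) :
    ‖1 / (ν : ℂ) * T - (1 / ν * I₀) ^ 3‖ ≤ e * (a / ν) ^ 3 * M₀ * (M₀ + ν * M₁) ^ 2 := by
  obtain ⟨r, hr, rfl⟩ : ∃ r, 1 ≤ r ∧ a = r * ν :=
    ⟨a / ν, (one_le_div hν).2 hνa, (div_mul_cancel₀ a hν.ne').symm⟩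
  have hnu : ‖1 / (ν : ℂ)‖ = 1 / ν := by
    rw [norm_div, norm_one, Complex.norm_real, Real.norm_of_nonneg hν.le]
  have hL : ‖1 / (ν : ℂ) * I₀‖ ≤ M₀ * r := by
    rw [norm_mul, hnu]
    calc 1 / ν * ‖I₀‖ ≤ 1 / ν * (M₀ * (r * ν)) := by gcongr
      _ = M₀ * r := by field_simp
  have hsplit : 1 / (ν : ℂ) * T - (1 / ν * I₀) ^ 3 =
      1 / ν * (T - I₁ * I₁ * I₀) + w * (I₁ + 1 / ν * I₀) * (1 / ν * I₀) := by
    rw [hI₁]; ring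
  have hgap : 0 ≤ e * M₀ ^ 2 * r ^ 2 * ((r - 1) * M₀ + (2 * r - 1) * ν * M₁) := by
    have : 0 ≤ (r - 1) * M₀ + (2 * r - 1) * ν * M₁ := by
      have : 0 ≤ 2 * r - 1 := by linarith
      have : 0 ≤ r - 1 := by linarith
      positivity
    positivity
  rw [hsplit]
  calc _ ≤ 1 / ν * (M₁ * M₁ * M₀ * (r * ν) ^ 3 * e) +
        M₀ * e * (M₁ * (r * ν) + M₀ * r) * (M₀ * r) := by
        refine (norm_add_le _ _).trans (add_le_add ?_ ?_)
        · rw [norm_mul, hnu]; gcongr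
        · rw [norm_mul, norm_mul]
          gcongr
          exact (norm_add_le _ _).trans (add_le_add hI₁b hL)
    _ = e * (r * ν / ν) ^ 3 * M₀ * (M₀ + ν * M₁) ^ 2 -
        e * M₀ ^ 2 * r ^ 2 * ((r - 1) * M₀ + (2 * r - 1) * ν * M₁) := by
        field_simp
        ring
    _ ≤ _ := sub_le_self _ hgap

theorem norm_le_of_continuousOn_Icc {E : Type*} [NormedAddCommGroup E] {f : ℝ → E} {a b M : ℝ}
    (hab : a < b) (hf : ContinuousOn f (Icc a b)) (hM : ∀ x ∈ Ioo a b, ‖f x‖ ≤ M) :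
    ∀ x ∈ Icc a b, ‖f x‖ ≤ M := by
  rw [← closure_Ioo hab.ne] at hf ⊢
  exact le_on_closure hM hf.norm continuousOn_const

theorem exists_continuous_eqOn_Icc {α β : Type*} [LinearOrder α] [TopologicalSpace α]
    [OrderTopology α] [TopologicalSpace β] {f : α → β} {a b : α} (hab : a ≤ b)
    (hf : ContinuousOn f (Icc a b)) : ∃ g : α → β, Continuous g ∧ EqOn g f (Icc a b) :=
  ⟨IccExtend hab ((Icc a b).domRestrict f), hf.domRestrict.Icc_extend',
    fun _ hx => IccExtend_of_mem _ _ hx⟩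

theorem norm_laplace_conv_sub_pow_three_le {u : ℂ → ℂ} {a ν M₀ M₁ : ℝ} (hν : 0 < ν)
    (hνa : ν ≤ a) (hu : ∀ x ∈ Icc 0 a, DifferentiableAt ℂ u x)
    (hu' : ContinuousOn (fun x : ℝ => deriv u x) (Icc 0 a)) (h0 : u 0 = 0)
    (hM₀ : ∀ x ∈ Icc 0 a, ‖u x‖ ≤ M₀) (hM₁ : ∀ x ∈ Icc 0 a, ‖deriv u x‖ ≤ M₁) :
    ‖1 / (ν : ℂ) * (∫ z₁ in (0 : ℝ)..a, ∫ z₂ in (0 : ℝ)..(a - z₁),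
        ∫ z₃ in (0 : ℝ)..(a - z₁ - z₂),
          (Real.exp (-(z₁ + z₂ + z₃) / ν) : ℂ) * deriv u z₁ * deriv u z₂ * u z₃) -
        (1 / (ν : ℂ) * ∫ z in (0 : ℝ)..a, (Real.exp (-z / ν) : ℂ) * u z) ^ 3‖ ≤
      Real.exp (-a / ν) * (a / ν) ^ 3 * M₀ * (M₀ + ν * M₁) ^ 2 := by
  have ha : 0 ≤ a := hν.le.trans hνa
  have hIcc : uIcc 0 a = Icc 0 a := uIcc_of_le ha
  have hcont : ContinuousOn (fun x : ℝ => u x) (Icc 0 a) := fun x hx =>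
    (hu x hx).hasDerivAt.comp_ofReal.continuousAt.continuousWithinAt
  -- the convolution estimates are stated for continuous functions on all of `ℝ`
  obtain ⟨U, hU, hUeq⟩ := exists_continuous_eqOn_Icc ha hcont
  obtain ⟨U', hU', hU'eq⟩ := exists_continuous_eqOn_Icc ha hu'
  have hUb : ∀ x ∈ Icc 0 a, ‖U x‖ ≤ M₀ := fun x hx => hUeq hx ▸ hM₀ x hx
  have hU'b : ∀ x ∈ Icc 0 a, ‖U' x‖ ≤ M₁ := fun x hx => hU'eq hx ▸ hM₁ x hx
  have hT : (∫ z₁ in (0 : ℝ)..a, ∫ z₂ in (0 : ℝ)..(a - z₁), ∫ z₃ in (0 : ℝ)..(a - z₁ - z₂),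
      (Real.exp (-(z₁ + z₂ + z₃) / ν) : ℂ) * deriv u z₁ * deriv u z₂ * u z₃) =
      truncConv (fun x => Real.exp (-x / ν) * U' x)
        (truncConv (fun x => Real.exp (-x / ν) * U' x)
          (truncConv (fun x => Real.exp (-x / ν) * U x) fun _ => 1)) a :=
    integral_simplex_eq_truncConv ha fun z₁ z₂ z₃ h₁ h₂ h₃ hs => by
      rw [hU'eq ⟨h₁, by linarith⟩, hU'eq ⟨h₂, by linarith⟩, hUeq ⟨h₃, by linarith⟩,
        show -(z₁ + z₂ + z₃) / ν = -z₁ / ν + -z₂ / ν + -z₃ / ν by ring, Real.exp_add,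
        Real.exp_add]
      push_cast
      ring
  have hL : ∫ x in (0 : ℝ)..a, (Real.exp (-x / ν) : ℂ) * u x =
      ∫ x in (0 : ℝ)..a, (Real.exp (-x / ν) : ℂ) * U x :=
    integral_congr fun x hx => by rw [hUeq (hIcc ▸ hx)]
  have hIBP : ∫ x in (0 : ℝ)..a, (Real.exp (-x / ν) : ℂ) * U' x =
      Real.exp (-a / ν) * u a + 1 / ν * ∫ x in (0 : ℝ)..a, (Real.exp (-x / ν) : ℂ) * U x := by
    rw [← hL, integral_congr fun x hx => by rw [hU'eq (hIcc ▸ hx)],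
      integral_exp_mul_deriv (hIcc ▸ hu) (hIcc ▸ hu'), h0, sub_zero]
  rw [hT, hL]
  exact norm_one_div_mul_sub_pow_three_le hν hνa (Real.exp_pos _).le
    ((norm_nonneg _).trans (hM₀ 0 ⟨le_rfl, ha⟩)) ((norm_nonneg _).trans (hM₁ 0 ⟨le_rfl, ha⟩))
    hIBP (norm_exp_mul_le (fun _ _ => hM₀ a ⟨ha, le_rfl⟩) a rfl)
    (norm_integral_le_of_norm_le_mul_exp ha hν.le (norm_exp_mul_le hUb))
    (norm_integral_le_of_norm_le_mul_exp ha hν.le (norm_exp_mul_le hU'b))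
    (norm_truncConv_truncConv_sub_le (by fun_prop) (by fun_prop) (by fun_prop) ha hν.le
      (norm_exp_mul_le hU'b) (norm_exp_mul_le hU'b) (norm_exp_mul_le hUb))

/-- failure of multiplicativity of the truncated Laplace transform is
exponentially small: if uhat is analytic on the disc of radius 1/K₁ with uhat(0) = 0,
K' > K₁ > 0 and 0 < ν < 1/K', then with L = (1/ν)∫₀^{1/K'} e^{-z/ν} uhat(z) dz and
T = ∫∫∫_{D_{K'}} e^{-(z₁+z₂+z₃)/ν} uhat'(z₁)uhat'(z₂)uhat(z₃), where
D_{K'} = {z₁,z₂,z₃ > 0 : z₁+z₂+z₃ < 1/K'}, one has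
|(1/ν)T - L³| ≤ e^{-1/(K'ν)}/(K'ν)³ · M₀(M₀ + νM₁)², with M₀, M₁ bounds for
|uhat| and |uhat'| on (0,1/K'). -/
theorem stmt_19 (K₁ K' ν : ℝ) (hK₁ : 0 < K₁) (hK : K₁ < K') (hν : 0 < ν)
    (hνK : ν < 1 / K') (uhat : ℂ → ℂ)
    (hanal : DifferentiableOn ℂ uhat (Metric.ball 0 (1 / K₁))) (h0 : uhat 0 = 0)
    (M₀ M₁ : ℝ)
    (hM₀ : ∀ z ∈ Set.Ioo (0 : ℝ) (1 / K'), ‖uhat z‖ ≤ M₀)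
    (hM₁ : ∀ z ∈ Set.Ioo (0 : ℝ) (1 / K'), ‖deriv uhat z‖ ≤ M₁) :
    ‖((1 / (ν : ℂ)) *
            (∫ z₁ in (0 : ℝ)..(1 / K'), ∫ z₂ in (0 : ℝ)..(1 / K' - z₁),
              ∫ z₃ in (0 : ℝ)..(1 / K' - z₁ - z₂),
                (Real.exp (-(z₁ + z₂ + z₃) / ν) : ℂ) *
                  deriv uhat z₁ * deriv uhat z₂ * uhat z₃) -
          ((1 / (ν : ℂ)) *
              ∫ z in (0 : ℝ)..(1 / K'), (Real.exp (-z / ν) : ℂ) * uhat z) ^ 3)‖ ≤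
      Real.exp (-(1 / (K' * ν))) / (K' * ν) ^ 3 * M₀ * (M₀ + ν * M₁) ^ 2 := by
  have hK' : 0 < K' := hK₁.trans hK
  have ha : (0 : ℝ) < 1 / K' := by positivity
  have hball : ∀ x ∈ Icc 0 (1 / K'), (x : ℂ) ∈ Metric.ball (0 : ℂ) (1 / K₁) := fun x hx => by
    rw [mem_ball_zero_iff, Complex.norm_real, Real.norm_of_nonneg hx.1]
    exact hx.2.trans_lt (one_div_lt_one_div_of_lt hK₁ hK)
  have hu' : ContinuousOn (fun x : ℝ => deriv uhat x) (Icc 0 (1 / K')) :=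
    (hanal.deriv Metric.isOpen_ball).continuousOn.comp Complex.continuous_ofReal.continuousOn hball
  have hRHS : Real.exp (-(1 / (K' * ν))) / (K' * ν) ^ 3 =
      Real.exp (-(1 / K') / ν) * (1 / K' / ν) ^ 3 := by
    rw [neg_div, div_div]; field_simp
  rw [hRHS]
  exact norm_laplace_conv_sub_pow_three_le hν hνK.le
    (fun x hx => hanal.differentiableAt (Metric.isOpen_ball.mem_nhds (hball x hx))) hu' h0
    (norm_le_of_continuousOn_Icc ha
      (hanal.continuousOn.comp Complex.continuous_ofReal.continuousOn hball) hM₀)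
    (norm_le_of_continuousOn_Icc ha hu' hM₁)
end
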